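/- For z = (z₁,z₂), w = (w₁,w₂) ∈ ℂ² with z₁w₂ − z₂w₁ ≠ 0, define φ₂(z,w) = ( |z₁w₁|² + (1/2)|z₁w₂ + w₁z₂|² + |z₂w₂|² ) / |z₁w₂ − z₂w₁|². Then φ₂(z,w) ≥ 1/2 for all such (z,w), and every real number r ≥ 1/2 is attained: for each r ≥ 1/2 there exist z, w ∈ ℂ² with z₁w₂ − z₂w₁ ≠ 0 and φ₂(z,w) = r. In particular the image of φ₂ is the interval [1/2, ∞). -/

import Mathlib

/-- The spherical function `φ₂` on `SL₂(ℂ)/T ≅ (ℙ¹ × ℙ¹) \ Δ`, in homogeneous coordinates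
`(z, w)` with `z₁w₂ − z₂w₁ ≠ 0`. -/
noncomputable def phi2 (z w : ℂ × ℂ) : ℝ :=
  (‖z.1 * w.1‖ ^ 2 + (1 / 2) * ‖z.1 * w.2 + w.1 * z.2‖ ^ 2 +
      ‖z.2 * w.2‖ ^ 2) / ‖z.1 * w.2 - z.2 * w.1‖ ^ 2

/-! Put `a = z₁w₂`, `b = z₂w₁`. Since `|z₁w₁| |z₂w₂| = |a| |b|`, AM–GM bounds the numerator of
`φ₂` below by `2|a||b| + |a + b|²/2`, and the triangle inequality gives
`|a - b|² ≤ (|a| + |b|)² ≤ |a + b|² + 4|a||b|`, so `φ₂ ≥ 1/2`.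
On the other hand `φ₂((1, 0), (x, 1)) = |x|² + 1/2` takes every value `≥ 1/2`. -/

theorem norm_sub_sq_le_norm_add_sq_add {E : Type*} [SeminormedAddCommGroup E] (a b : E) :
    ‖a - b‖ ^ 2 ≤ ‖a + b‖ ^ 2 + 4 * ‖a‖ * ‖b‖ := by
  have h_sub : ‖a - b‖ ≤ ‖a‖ + ‖b‖ := norm_sub_le a b
  have h_add : |‖a‖ - ‖b‖| ≤ ‖a + b‖ := by
    simpa using abs_norm_sub_norm_le a (-b)
  nlinarith [sq_abs (‖a‖ - ‖b‖), abs_nonneg (‖a‖ - ‖b‖), norm_nonneg (a - b)]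

theorem one_half_le_phi2 {z w : ℂ × ℂ} (h : z.1 * w.2 - z.2 * w.1 ≠ 0) : 1 / 2 ≤ phi2 z w := by
  have h_mul : ‖z.1 * w.1‖ * ‖z.2 * w.2‖ = ‖z.1 * w.2‖ * ‖z.2 * w.1‖ := by
    simp only [norm_mul]; ring
  have h_tri := norm_sub_sq_le_norm_add_sq_add (z.1 * w.2) (z.2 * w.1)
  rw [phi2, le_div_iff₀ (by positivity), mul_comm w.1 z.2]
  nlinarith [sq_nonneg (‖z.1 * w.1‖ - ‖z.2 * w.2‖)]

theorem phi2_one_zero (x : ℂ) : phi2 (1, 0) (x, 1) = ‖x‖ ^ 2 + 1 / 2 := by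
  simp [phi2]

theorem exists_phi2_eq {r : ℝ} (hr : 1 / 2 ≤ r) :
    ∃ z w : ℂ × ℂ, z.1 * w.2 - z.2 * w.1 ≠ 0 ∧ phi2 z w = r := by
  refine ⟨(1, 0), ((√(r - 1 / 2) : ℝ), 1), by simp, ?_⟩
  rw [phi2_one_zero, Complex.norm_real, Real.norm_eq_abs, sq_abs, Real.sq_sqrt (by linarith)]
  ring

/-- `φ₂(z, w) ≥ 1/2` whenever `z₁w₂ − z₂w₁ ≠ 0`, and every `r ≥ 1/2` is attained;
i.e. the image of `φ₂` is `[1/2, ∞)`. -/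
theorem stmt15 :
    (∀ z w : ℂ × ℂ, z.1 * w.2 - z.2 * w.1 ≠ 0 → 1 / 2 ≤ phi2 z w) ∧
    (∀ r : ℝ, 1 / 2 ≤ r →
      ∃ z w : ℂ × ℂ, z.1 * w.2 - z.2 * w.1 ≠ 0 ∧ phi2 z w = r) :=
  ⟨fun _ _ h => one_half_le_phi2 h, fun _ hr => exists_phi2_eq hr⟩
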